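/- arXiv:1702.05722 — 3 statements merged into one kernel-verified Lean document; each statement's English description precedes it below -/
import Mathlib

section
/- Every compact metrizable topological space admits a compatible metric d with tame growth of covering numbers, i.e., for every δ > 0, lim_{ε→0} ε^δ log #(𝒳, d, ε) = 0. -/
/-!
Embed `𝒳` topologically into the Hilbert cube `ℕ → [0,1]` and pull back the metric
`d(x, y) = ∑ₙ min(2⁻ⁿ, |xₙ - yₙ|)`. Points agreeing up to `1/M` in their first `K` coordinates are
at distance at most `2K/M + 2⁻ᴷ⁺¹`, so a grid of mesh `4⁻ᵏ` on the first `k ≈ log₂(1/ε)`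
coordinates gives covers by `exp(O(log²(1/ε)))` open sets of diameter `< ε`, and
`ε^δ log²(1/ε) → 0`.
-/

open Real Filter Set Topology

/-- Minimal cardinality of a cover of `𝒳` by open sets of `ρ`-diameter less than `ε`. -/
noncomputable def coverNum (𝒳 : Type*) [TopologicalSpace 𝒳] (ρ : 𝒳 → 𝒳 → ℝ) (ε : ℝ) : ℕ :=
  sInf {N : ℕ | ∃ U : Fin N → Set 𝒳, (∀ i, IsOpen (U i)) ∧ (∀ x, ∃ i, x ∈ U i) ∧
    ∀ i, ∀ x ∈ U i, ∀ y ∈ U i, ρ x y < ε}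

open unitInterval

section Cover

variable {X Y ι : Type*} [TopologicalSpace X] [TopologicalSpace Y]

def IsSmallOpenCover (ρ : X → X → ℝ) (ε : ℝ) (U : ι → Set X) : Prop :=
  (∀ i, IsOpen (U i)) ∧ (∀ x, ∃ i, x ∈ U i) ∧ ∀ i, ∀ x ∈ U i, ∀ y ∈ U i, ρ x y < ε

theorem coverNum_le_card [Fintype ι] {ρ : X → X → ℝ} {ε : ℝ} {U : ι → Set X}
    (hU : IsSmallOpenCover ρ ε U) : coverNum X ρ ε ≤ Fintype.card ι := by
  obtain ⟨hopen, hcover, hsmall⟩ := hU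
  let e := Fintype.equivFin ι
  refine Nat.sInf_le ⟨U ∘ e.symm, fun i => hopen _, fun x => ?_, fun i => hsmall _⟩
  obtain ⟨i, hi⟩ := hcover x
  exact ⟨e i, by simpa using hi⟩

theorem IsSmallOpenCover.preimage {ρ : Y → Y → ℝ} {ε : ℝ} {U : ι → Set Y}
    (hU : IsSmallOpenCover ρ ε U) {f : X → Y} (hf : Continuous f) :
    IsSmallOpenCover (fun p q => ρ (f p) (f q)) ε (fun i => f ⁻¹' U i) :=
  ⟨fun i => (hU.1 i).preimage hf, fun x => hU.2.1 (f x),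
    fun i _ hx _ hy => hU.2.2 i _ hx _ hy⟩

end Cover

theorem exists_dist_natCast_div_lt {a : ℝ} (ha : a ∈ Icc (0 : ℝ) 1) {M : ℕ} (hM : 0 < M) :
    ∃ j : Fin (M + 1), dist a (j / M) < 1 / M := by
  have hM' : (0 : ℝ) < M := by exact_mod_cast hM
  have haM : 0 ≤ a * M := mul_nonneg ha.1 hM'.le
  refine ⟨⟨⌊a * M⌋₊, Nat.lt_succ_of_le (Nat.floor_le_of_le ?_)⟩, ?_⟩
  · simpa using mul_le_of_le_one_left hM'.le ha.2
  have hlo : (⌊a * M⌋₊ : ℝ) ≤ a * M := Nat.floor_le haM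
  have hhi : a * M < ⌊a * M⌋₊ + 1 := Nat.lt_floor_add_one _
  rw [Real.dist_eq, abs_sub_lt_iff]
  constructor <;> · field_simp; linarith

open scoped PiCountable

theorem PiCountable.dist_le_of_forall_lt {E : ℕ → Type*} [∀ n, PseudoMetricSpace (E n)]
    {x y : ∀ n, E n} {K : ℕ} {r : ℝ} (h : ∀ n < K, dist (x n) (y n) ≤ r) :
    dist x y ≤ K * r + 2 * 2⁻¹ ^ K := by
  let f : ℕ → ℝ := fun n => min (2⁻¹ ^ n) (dist (x n) (y n))
  have hdist : dist x y = ∑' n, f n := PiCountable.dist_eq_tsum x y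
  have hf : Summable f := PiCountable.dist_summable x y
  have hhead : ∑ n ∈ Finset.range K, f n ≤ K * r := calc
    ∑ n ∈ Finset.range K, f n ≤ ∑ n ∈ Finset.range K, r :=
      Finset.sum_le_sum fun n hn => (min_le_right _ _).trans (h n (Finset.mem_range.1 hn))
    _ = K * r := by simp
  have htail : ∑' n, f (n + K) ≤ 2 * 2⁻¹ ^ K := calc
    ∑' n, f (n + K) ≤ ∑' n, 2⁻¹ ^ K * (2⁻¹ : ℝ) ^ n :=
      ((summable_nat_add_iff K).2 hf).tsum_le_tsum
        (fun n => (min_le_left _ _).trans_eq (by rw [pow_add, mul_comm]))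
        ((summable_geometric_of_lt_one (by norm_num) (by norm_num)).mul_left _)
    _ = 2 * 2⁻¹ ^ K := by rw [tsum_mul_left, tsum_geometric_inv_two, mul_comm]
  rw [hdist, ← hf.sum_add_tsum_nat_add K]
  exact add_le_add hhead htail

def hilbertCubeCell (K M : ℕ) (v : Fin K → Fin (M + 1)) : Set (ℕ → I) :=
  ⋂ n : Fin K, (fun x : ℕ → I => (x n : ℝ)) ⁻¹' Metric.ball ((v n : ℕ) / M) (1 / M)

theorem isSmallOpenCover_hilbertCubeCell {K M : ℕ} (hM : 0 < M) {ε : ℝ}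
    (hε : 2 * K / M + 2 * 2⁻¹ ^ K < ε) :
    IsSmallOpenCover (fun x y : ℕ → I => dist x y) ε (hilbertCubeCell K M) := by
  refine ⟨fun v => isOpen_iInter_of_finite fun n => Metric.isOpen_ball.preimage (by fun_prop),
    fun x => ?_, fun v x hx y hy => ?_⟩
  · choose v hv using fun n : Fin K => exists_dist_natCast_div_lt (x n).2 hM
    exact ⟨v, mem_iInter.2 hv⟩
  · refine (PiCountable.dist_le_of_forall_lt (K := K) (r := 2 / M) fun n hn => ?_).trans_lt ?_
    · have hxn := mem_iInter.1 hx ⟨n, hn⟩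
      have hyn := mem_iInter.1 hy ⟨n, hn⟩
      calc dist (x n) (y n) = dist (x n : ℝ) (y n) := Subtype.dist_eq _ _
        _ ≤ dist (x n : ℝ) ((v ⟨n, hn⟩ : ℕ) / M) + dist (y n : ℝ) ((v ⟨n, hn⟩ : ℕ) / M) :=
          dist_triangle_right _ _ _
        _ ≤ 1 / M + 1 / M := add_le_add hxn.le hyn.le
        _ = 2 / M := by ring
    · exact (le_of_eq (by ring)).trans_lt hε

theorem coverNum_comp_le {X : Type*} [TopologicalSpace X] {f : X → ℕ → I} (hf : Continuous f)
    {K M : ℕ} (hM : 0 < M) {ε : ℝ} (hε : 2 * K / M + 2 * 2⁻¹ ^ K < ε) :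
    coverNum X (fun p q => dist (f p) (f q)) ε ≤ (M + 1) ^ K := by
  simpa using coverNum_le_card ((isSmallOpenCover_hilbertCubeCell hM hε).preimage hf)

theorem Real.log_natCast_le_log_natCast {m n : ℕ} (h : m ≤ n) : log m ≤ log n := by
  rcases m.eq_zero_or_pos with rfl | hm
  · simpa using log_natCast_nonneg n
  · exact log_le_log (by exact_mod_cast hm) (by exact_mod_cast h)

theorem exists_nat_le_two_pow {y : ℝ} (hy : 1 < y) :
    ∃ k : ℕ, 0 < k ∧ y ≤ 2 ^ k ∧ (k : ℝ) ≤ logb 2 (2 * y) := by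
  have hlog : 0 < logb 2 y := logb_pos one_lt_two hy
  refine ⟨⌈logb 2 y⌉₊, Nat.ceil_pos.2 hlog, ?_, ?_⟩
  · rw [← rpow_natCast, ← logb_le_iff_le_rpow one_lt_two (by linarith)]
    exact Nat.le_ceil _
  · rw [logb_mul two_ne_zero (by linarith), logb_self_eq_one one_lt_two, add_comm]
    exact (Nat.ceil_lt_add_one hlog.le).le

theorem log_coverNum_comp_le {X : Type*} [TopologicalSpace X] {f : X → ℕ → I}
    (hf : Continuous f) {ε : ℝ} (hε0 : 0 < ε) (hε : ε < 8) :
    log (coverNum X (fun p q => dist (f p) (f q)) ε) ≤ 3 / log 2 * log (16 / ε) ^ 2 := by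
  -- grid of mesh `4⁻ᵏ` on the first `k` coordinates, where `2ᵏ ≥ 8 / ε`
  obtain ⟨k, hk0, hk, hklog⟩ := exists_nat_le_two_pow (y := 8 / ε) ((one_lt_div hε0).2 hε)
  have hsmall : 2 * k / ((4 ^ k : ℕ) : ℝ) + 2 * 2⁻¹ ^ k < ε := by
    have hkpow : (k : ℝ) ≤ 2 ^ k := by exact_mod_cast Nat.lt_two_pow_self.le
    have hpow : (0 : ℝ) < 2 ^ k := by positivity
    rw [div_le_iff₀ hε0] at hk
    rw [Nat.cast_pow, Nat.cast_ofNat, show (4 : ℝ) ^ k = 2 ^ k * 2 ^ k by rw [← mul_pow]; norm_num,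
      inv_pow]
    field_simp
    nlinarith
  have hcard : (4 ^ k + 1) ^ k ≤ 8 ^ (k * k) := by
    rw [pow_mul]
    refine Nat.pow_le_pow_left ?_ k
    calc 4 ^ k + 1 ≤ 2 ^ k * 4 ^ k := by
          nlinarith [Nat.le_self_pow hk0.ne' 2, Nat.one_le_pow k 4 (by norm_num)]
      _ = 8 ^ k := by rw [← mul_pow]; norm_num
  calc log (coverNum X (fun p q => dist (f p) (f q)) ε)
      ≤ log ((8 ^ (k * k) : ℕ) : ℝ) :=
        log_natCast_le_log_natCast ((coverNum_comp_le hf (by positivity) hsmall).trans hcard)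
    _ = 3 * log 2 * (k : ℝ) ^ 2 := by
        rw [Nat.cast_pow, Real.log_pow, show ((8 : ℕ) : ℝ) = 2 ^ 3 by norm_num, Real.log_pow]
        push_cast; ring
    _ ≤ 3 * log 2 * logb 2 (16 / ε) ^ 2 := by
        rw [show 2 * (8 / ε) = 16 / ε by ring] at hklog
        gcongr
    _ = 3 / log 2 * log (16 / ε) ^ 2 := by
        rw [logb]; field_simp

theorem tendsto_rpow_mul_log_div_sq {c δ : ℝ} (hc : 0 < c) (hδ : 0 < δ) :
    Tendsto (fun ε => ε ^ δ * log (c / ε) ^ 2) (𝓝[>] 0) (𝓝 0) := by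
  have hpow : Tendsto (fun ε : ℝ => ε ^ δ) (𝓝[>] 0) (𝓝 0) := by
    simpa [zero_rpow hδ.ne'] using
      ((continuous_rpow_const hδ.le).tendsto 0).mono_left nhdsWithin_le_nhds
  have hlin := tendsto_log_mul_rpow_nhdsGT_zero hδ
  have hsq := (tendsto_log_mul_rpow_nhdsGT_zero (half_pos hδ)).pow 2
  have hlim := ((hpow.const_mul (log c ^ 2)).sub (hlin.const_mul (2 * log c))).add hsq
  simp only [mul_zero, sub_zero, zero_add, ne_eq, OfNat.ofNat_ne_zero, not_false_eq_true,
    zero_pow] at hlim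
  refine hlim.congr' (eventually_nhdsWithin_of_forall fun ε (hε : 0 < ε) => ?_)
  have hhalf : (ε ^ (δ / 2)) ^ 2 = ε ^ δ := by
    rw [← rpow_mul_natCast hε.le]; norm_num
  dsimp only
  rw [log_div hc.ne' hε.ne', ← hhalf]
  ring

/-- Every compact metrizable space admits a compatible metric with tame growth of
covering numbers: for every `δ > 0`, `ε^δ log #(𝒳, d, ε) → 0` as `ε → 0`. -/
theorem exists_metric_tame_growth (𝒳 : Type*) [t : TopologicalSpace 𝒳]
    [CompactSpace 𝒳] [TopologicalSpace.MetrizableSpace 𝒳] :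
    ∃ m : MetricSpace 𝒳,
      m.toUniformSpace.toTopologicalSpace = t ∧
      ∀ δ : ℝ, 0 < δ →
        Tendsto (fun ε : ℝ =>
            ε ^ δ * Real.log (coverNum 𝒳 (fun x y => @dist 𝒳 m.toDist x y) ε))
          (𝓝[>] (0 : ℝ)) (𝓝 0) := by
  let := TopologicalSpace.metrizableSpaceMetric 𝒳
  obtain ⟨F, hF⟩ := Metric.PiNatEmbed.exists_embedding_to_hilbert_cube (X := 𝒳)
  let : MetricSpace (ℕ → I) := PiCountable.metricSpace
  refine ⟨hF.comapMetricSpace F, rfl, fun δ hδ => ?_⟩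
  have hlt8 : ∀ᶠ ε in 𝓝[>] (0 : ℝ), ε < 8 :=
    nhdsWithin_le_nhds (eventually_lt_nhds (by norm_num))
  have hbound := (tendsto_rpow_mul_log_div_sq (c := 16) (by norm_num) hδ).const_mul (3 / log 2)
  rw [mul_zero] at hbound
  refine squeeze_zero' (eventually_nhdsWithin_of_forall fun ε (hε : 0 < ε) =>
    mul_nonneg (rpow_nonneg hε.le δ) (log_natCast_nonneg _)) ?_ hbound
  filter_upwards [self_mem_nhdsWithin, hlt8] with ε (hε0 : 0 < ε) hε8
  calc ε ^ δ * log (coverNum 𝒳 (fun p q => dist (F p) (F q)) ε)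
      ≤ ε ^ δ * (3 / log 2 * log (16 / ε) ^ 2) :=
        mul_le_mul_of_nonneg_left (log_coverNum_comp_le hF.continuous hε0 hε8)
          (rpow_nonneg hε0.le δ)
    _ = 3 / log 2 * (ε ^ δ * log (16 / ε) ^ 2) := by ring
end

section
/- Suppose a compact metric space (𝒳, d) with continuous T : 𝒳 → 𝒳 satisfies tame growth of covering numbers (for every δ > 0, ε^δ log #(𝒳,d,ε) → 0 as ε → 0). Then limsup_{ε→0} S(𝒳,T,d,ε)/|log ε| = limsup_{ε→0} S̃(𝒳,T,d,ε)/|log ε|, and the corresponding liminf equality also holds; i.e., the upper and lower metric mean dimensions can be computed using time-averaged Bowen metrics d̄_n in place of sup-metrics d_n. -/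
/-!
Since `d̄ₙ ≤ dₙ`, `S̃ ≤ S`. Conversely, cover `𝒳` by sets `E j` of `d̄ₙ`-diameter `< τε` and by
sets of `d`-diameter `< ε`. By Markov's inequality, the orbit of a point `x ∈ E j` is `ε`-far
from that of a fixed `x₀ ∈ E j` at no more than `⌈τn⌉` times; recording these times and the
small sets visited by `Tᵏx` at them splits `E j` into pieces of `dₙ`-diameter `< 2ε`. So
`#(dₙ, 2ε) ≤ #(d̄ₙ, τε) · 2ⁿ · #(d, ε) ^ ⌈τn⌉`, whence `S(2ε) ≤ S̃(τε) + log 2 + τ log #(d, ε)`.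
At scale `ε/2` with `τ = (ε/2)^δ`, tame growth bounds the last term by `1` for small `ε`; as
`|log (ε/2)^(1+δ)| ≈ (1+δ) |log ε|`, this gives
`S(ε) / |log ε| ≤ (1+δ)² S̃(φ ε) / |log φ ε| + δ` for the reparametrisation
`φ ε = (ε/2)^(1+δ)` of `𝓝[>] 0`. Letting `δ → 0` yields both equalities.
-/

open Real Filter Set Topology
open scoped NNReal

/-- `d_n(x,y) = max_{0 ≤ k < n} d(T^k x, T^k y)`. -/
noncomputable def bowenMax {𝒳 : Type*} [PseudoMetricSpace 𝒳] (T : 𝒳 → 𝒳) (n : ℕ)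
    (x y : 𝒳) : ℝ :=
  (((Finset.range n).sup fun k => nndist (T^[k] x) (T^[k] y)) : ℝ≥0)

/-- `d̄_n(x,y) = (1/n) Σ_{k=0}^{n-1} d(T^k x, T^k y)`. -/
noncomputable def bowenAvg {𝒳 : Type*} [PseudoMetricSpace 𝒳] (T : 𝒳 → 𝒳) (n : ℕ)
    (x y : 𝒳) : ℝ :=
  (∑ k ∈ Finset.range n, dist (T^[k] x) (T^[k] y)) / n

/-- `S(𝒳,T,d,ε) = lim_n (1/n) log #(𝒳, d_n, ε)`; the limit exists by subadditivity, so it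
equals the `limsup`. -/
noncomputable def SMax {𝒳 : Type*} [MetricSpace 𝒳] (T : 𝒳 → 𝒳) (ε : ℝ) : ℝ :=
  Filter.atTop.limsup fun n : ℕ => Real.log (coverNum 𝒳 (bowenMax T n) ε) / n

/-- `S̃(𝒳,T,d,ε) = lim_n (1/n) log #(𝒳, d̄_n, ε)`. -/
noncomputable def SAvg {𝒳 : Type*} [MetricSpace 𝒳] (T : 𝒳 → 𝒳) (ε : ℝ) : ℝ :=
  Filter.atTop.limsup fun n : ℕ => Real.log (coverNum 𝒳 (bowenAvg T n) ε) / n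

theorem Real.log_natCast_le_log_natCast_s14 {a b : ℕ} (h : a ≤ b) : Real.log a ≤ Real.log b := by
  rcases a.eq_zero_or_pos with rfl | ha
  · simpa using Real.log_natCast_nonneg b
  · exact Real.log_le_log (by exact_mod_cast ha) (by exact_mod_cast h)

theorem Filter.limsup_le_limsup_add_of_tendsto {ι : Type*} {l : Filter ι} [l.NeBot]
    {u v w : ι → ℝ} {c : ℝ} (huvw : ∀ᶠ i in l, u i ≤ v i + w i) (hw : Tendsto w l (𝓝 c))
    (hu : IsCoboundedUnder (· ≤ ·) l u) (hv : IsBoundedUnder (· ≤ ·) l v)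
    (hv' : IsBoundedUnder (· ≥ ·) l v) :
    limsup u l ≤ limsup v l + c :=
  calc limsup u l ≤ limsup (v + w) l :=
        limsup_le_limsup huvw hu (isBoundedUnder_le_add hv hw.isBoundedUnder_le)
    _ ≤ limsup v l + limsup w l := limsup_add_le hv' hv hw.isCoboundedUnder_le hw.isBoundedUnder_le
    _ = limsup v l + c := by rw [hw.limsup_eq]

theorem Filter.map_eq_self_of_rightInverse {α : Type*} {l : Filter α} {φ ψ : α → α}
    (hφ : Tendsto φ l l) (hψ : Tendsto ψ l l) (h : ∀ᶠ x in l, φ (ψ x) = x) : map φ l = l :=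
  le_antisymm hφ <| calc
    l = map (φ ∘ ψ) l := by rw [map_congr (show φ ∘ ψ =ᶠ[l] id from h), map_id]
    _ = map φ (map ψ l) := map_map.symm
    _ ≤ map φ l := map_mono hψ

theorem tendsto_nhdsGT_zero_of_continuousAt {f : ℝ → ℝ} (hf : ContinuousAt f 0) (hf0 : f 0 = 0)
    (hpos : ∀ x, 0 < x → 0 < f x) : Tendsto f (𝓝[>] 0) (𝓝[>] 0) := by
  refine tendsto_nhdsWithin_iff.2 ⟨?_, eventually_mem_nhdsWithin.mono fun _ hx => hpos _ hx⟩
  simpa [hf0] using hf.tendsto.mono_left nhdsWithin_le_nhds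

theorem map_div_two_rpow_nhdsGT_zero {c : ℝ} (hc : 0 < c) :
    map (fun ε : ℝ => (ε / 2) ^ c) (𝓝[>] 0) = 𝓝[>] 0 := by
  refine map_eq_self_of_rightInverse (ψ := fun y => 2 * y ^ c⁻¹)
    (tendsto_nhdsGT_zero_of_continuousAt ?_ (by simp [hc.ne']) fun x hx => by positivity)
    (tendsto_nhdsGT_zero_of_continuousAt ?_ (by simp [hc.ne']) fun x hx => by positivity) ?_
  · exact (continuousAt_id.div_const 2).rpow_const (Or.inr hc.le)
  · exact continuousAt_const.mul (continuousAt_id.rpow_const (Or.inr (inv_pos.2 hc).le))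
  · filter_upwards [self_mem_nhdsWithin] with y (hy : 0 < y)
    rw [mul_div_cancel_left₀ _ two_ne_zero, ← Real.rpow_mul hy.le, inv_mul_cancel₀ hc.ne',
      Real.rpow_one]

theorem abs_log_div_two_rpow {ε c : ℝ} (hε : 0 < ε) (hε1 : ε < 1) (hc : 0 < c) :
    |Real.log ((ε / 2) ^ c)| = c * (|Real.log ε| + Real.log 2) := by
  have hlog := Real.log_neg hε hε1
  rw [Real.log_rpow (by positivity), Real.log_div hε.ne' two_ne_zero,
    abs_of_neg (mul_neg_of_pos_of_neg hc (by linarith [Real.log_pos one_lt_two])),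
    abs_of_neg hlog]
  ring

theorem Real.sInf_eq_sInf_of_forall_lt_mem {A B : Set ℝ} (hAB : A ⊆ B)
    (hBA : ∀ b ∈ B, ∀ c, b < c → c ∈ A) : sInf A = sInf B := by
  rcases B.eq_empty_or_nonempty with rfl | ⟨b, hb⟩
  · rw [subset_empty_iff.1 hAB]
  by_cases hB : BddBelow B
  · refine le_antisymm (le_csInf ⟨b, hb⟩ fun b' hb' => ?_)
      (csInf_le_csInf hB ⟨b + 1, hBA b hb _ (lt_add_one b)⟩ hAB)
    exact le_of_forall_gt_imp_ge_of_dense fun c hc => csInf_le (hB.mono hAB) (hBA b' hb' c hc)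
  · have hA : ¬BddBelow A := fun ⟨a, ha⟩ => hB ⟨a, fun b hb =>
      le_of_forall_gt_imp_ge_of_dense fun c hc => ha (hBA b hb c hc)⟩
    rw [Real.sInf_of_not_bddBelow hA, Real.sInf_of_not_bddBelow hB]

theorem Real.sSup_eq_sSup_of_forall_lt_mem {A B : Set ℝ} (hAB : A ⊆ B)
    (hBA : ∀ b ∈ B, ∀ c, c < b → c ∈ A) : sSup A = sSup B := by
  rcases B.eq_empty_or_nonempty with rfl | ⟨b, hb⟩
  · rw [subset_empty_iff.1 hAB]
  by_cases hB : BddAbove B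
  · refine le_antisymm (csSup_le_csSup hB ⟨b - 1, hBA b hb _ (sub_one_lt b)⟩ hAB)
      (csSup_le ⟨b, hb⟩ fun b' hb' => ?_)
    exact le_of_forall_lt_imp_le_of_dense fun c hc => le_csSup (hB.mono hAB) (hBA b' hb' c hc)
  · have hA : ¬BddAbove A := fun ⟨a, ha⟩ => hB ⟨a, fun b hb =>
      le_of_forall_lt_imp_le_of_dense fun c hc => ha (hBA b hb c hc)⟩
    rw [Real.sSup_of_not_bddAbove hA, Real.sSup_of_not_bddAbove hB]

theorem exists_pos_one_add_sq_mul_add_lt {a c : ℝ} (h : a < c) :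
    ∃ δ > 0, (1 + δ) ^ 2 * a + δ < c := by
  have hcont : Tendsto (fun δ : ℝ => (1 + δ) ^ 2 * a + δ) (𝓝[>] 0) (𝓝 a) := by
    have hc : Continuous fun δ : ℝ => (1 + δ) ^ 2 * a + δ := by fun_prop
    simpa using (hc.tendsto 0).mono_left nhdsWithin_le_nhds
  obtain ⟨δ, hδc, hδ⟩ := ((hcont.eventually (gt_mem_nhds h)).and self_mem_nhdsWithin).exists
  exact ⟨δ, hδ, hδc⟩

section Rescaling

variable {α : Type*} {l : Filter α} {f g : α → ℝ}

theorem Filter.limsup_eq_limsup_of_forall_lt (hgf : g ≤ᶠ[l] f)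
    (h : ∀ a c, a < c → (∀ᶠ x in l, g x ≤ a) → ∀ᶠ x in l, f x ≤ c) :
    limsup f l = limsup g l := by
  simp only [limsup_eq]
  exact Real.sInf_eq_sInf_of_forall_lt_mem
    (fun a ha => (hgf.and (ha : ∀ᶠ x in l, f x ≤ a)).mono fun _ hx => hx.1.trans hx.2)
    fun a ha c hc => h a c hc ha

theorem Filter.liminf_eq_liminf_of_forall_lt (hgf : g ≤ᶠ[l] f)
    (h : ∀ a c, c < a → (∀ᶠ x in l, a ≤ f x) → ∀ᶠ x in l, c ≤ g x) :
    liminf f l = liminf g l := by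
  simp only [liminf_eq]
  refine (Real.sSup_eq_sSup_of_forall_lt_mem
    (fun a ha => (hgf.and (ha : ∀ᶠ x in l, a ≤ g x)).mono fun _ hx => hx.2.trans hx.1)
    fun a ha c hc => h a c hc ha).symm

theorem Filter.limsup_eq_and_liminf_eq_of_le_rescale (hgf : g ≤ᶠ[l] f)
    (hfg : ∀ δ > 0, ∃ φ : α → α, map φ l = l ∧ ∀ᶠ x in l, f x ≤ (1 + δ) ^ 2 * g (φ x) + δ) :
    limsup f l = limsup g l ∧ liminf f l = liminf g l := by
  refine ⟨limsup_eq_limsup_of_forall_lt hgf fun a c hac hga => ?_,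
    liminf_eq_liminf_of_forall_lt hgf fun a c hca haf => ?_⟩
  · obtain ⟨δ, hδ, hδc⟩ := exists_pos_one_add_sq_mul_add_lt hac
    obtain ⟨φ, hφ, hfφ⟩ := hfg δ hδ
    rw [← hφ, eventually_map] at hga
    filter_upwards [hga, hfφ] with x hgx hfx
    nlinarith [mul_le_mul_of_nonneg_left hgx (sq_nonneg (1 + δ))]
  · obtain ⟨δ, hδ, hδa⟩ := exists_pos_one_add_sq_mul_add_lt hca
    obtain ⟨φ, hφ, hfφ⟩ := hfg δ hδ
    rw [← hφ, eventually_map]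
    filter_upwards [haf, hfφ] with x hfx hfφx
    by_contra! hlt
    nlinarith [mul_lt_mul_of_pos_left hlt (by positivity : (0 : ℝ) < (1 + δ) ^ 2)]

end Rescaling

section Cover

variable {𝒳 : Type*} [TopologicalSpace 𝒳] {ι : Type*} {ρ ρ' : 𝒳 → 𝒳 → ℝ} {ε : ℝ}

def IsFineOpenCover (ρ : 𝒳 → 𝒳 → ℝ) (ε : ℝ) (U : ι → Set 𝒳) : Prop :=
  (∀ i, IsOpen (U i)) ∧ (∀ x, ∃ i, x ∈ U i) ∧ ∀ i, ∀ x ∈ U i, ∀ y ∈ U i, ρ x y < ε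

theorem IsFineOpenCover.comp_equiv {κ : Type*} {U : ι → Set 𝒳} (hU : IsFineOpenCover ρ ε U)
    (e : κ ≃ ι) : IsFineOpenCover ρ ε (U ∘ e) :=
  ⟨fun i => hU.1 _, fun x => let ⟨i, hi⟩ := hU.2.1 x; ⟨e.symm i, by simpa using hi⟩,
    fun i => hU.2.2 _⟩

theorem IsFineOpenCover.coverNum_le [Fintype ι] {U : ι → Set 𝒳}
    (hU : IsFineOpenCover ρ ε U) : coverNum 𝒳 ρ ε ≤ Fintype.card ι :=
  Nat.sInf_le ⟨_, hU.comp_equiv (Fintype.equivFin ι).symm⟩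

theorem IsFineOpenCover.mono {U : ι → Set 𝒳} (hU : IsFineOpenCover ρ ε U)
    (hρ : ∀ x y, ρ' x y ≤ ρ x y) : IsFineOpenCover ρ' ε U :=
  ⟨hU.1, hU.2.1, fun i x hx y hy => (hρ x y).trans_lt (hU.2.2 i x hx y hy)⟩

theorem IsFineOpenCover.card_pos [Nonempty 𝒳] [Fintype ι] {U : ι → Set 𝒳}
    (hU : IsFineOpenCover ρ ε U) : 0 < Fintype.card ι :=
  Fintype.card_pos_iff.2 ⟨(hU.2.1 (Classical.arbitrary 𝒳)).choose⟩

theorem exists_isFineOpenCover_coverNum [Fintype ι] {U : ι → Set 𝒳}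
    (hU : IsFineOpenCover ρ ε U) :
    ∃ V : Fin (coverNum 𝒳 ρ ε) → Set 𝒳, IsFineOpenCover ρ ε V :=
  Nat.sInf_mem (s := {N | ∃ V : Fin N → Set 𝒳, IsFineOpenCover ρ ε V})
    ⟨_, _, hU.comp_equiv (Fintype.equivFin ι).symm⟩

theorem coverNum_le_coverNum_of_le [Fintype ι] {U : ι → Set 𝒳}
    (hU : IsFineOpenCover ρ ε U) (hρ : ∀ x y, ρ' x y ≤ ρ x y) :
    coverNum 𝒳 ρ' ε ≤ coverNum 𝒳 ρ ε :=
  let ⟨_, hV⟩ := exists_isFineOpenCover_coverNum hU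
  (hV.mono hρ).coverNum_le.trans_eq (Fintype.card_fin _)

/-- Continuity of `ρ` at the diagonal gives every point an open neighbourhood of small
`ρ`-diameter. -/
theorem exists_isFineOpenCover [CompactSpace 𝒳] (hρ : Continuous fun p : 𝒳 × 𝒳 => ρ p.1 p.2)
    (hdiag : ∀ x, ρ x x < ε) : ∃ t : Finset 𝒳, ∃ U : t → Set 𝒳, IsFineOpenCover ρ ε U := by
  have hopen : IsOpen {p : 𝒳 × 𝒳 | ρ p.1 p.2 < ε} := isOpen_lt hρ continuous_const
  choose u v hu hv hxu hxv huv using fun x => isOpen_prod_iff.1 hopen x x (hdiag x)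
  obtain ⟨t, ht⟩ := isCompact_univ.elim_finite_subcover (fun x => u x ∩ v x)
    (fun x => (hu x).inter (hv x)) fun x _ => mem_iUnion.2 ⟨x, hxu x, hxv x⟩
  refine ⟨t, fun x => u x ∩ v x, fun x => (hu x).inter (hv x), fun y => ?_,
    fun x y hy z hz => huv x (mk_mem_prod hy.1 hz.2)⟩
  obtain ⟨x, hx, hy⟩ := mem_iUnion₂.1 (ht (mem_univ y))
  exact ⟨⟨x, hx⟩, hy⟩

variable (ρ ε) in
theorem coverNum_eq_zero_of_isEmpty [IsEmpty 𝒳] : coverNum 𝒳 ρ ε = 0 := by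
  simpa using (show IsFineOpenCover ρ ε (Empty.elim : Empty → Set 𝒳) from
    ⟨nofun, isEmptyElim, nofun⟩).coverNum_le

variable (ρ ε) in
theorem log_coverNum_div_nonneg (n : ℕ) :
    0 ≤ Real.log (coverNum 𝒳 ρ ε) / n :=
  div_nonneg (Real.log_natCast_nonneg _) n.cast_nonneg

end Cover

section Bowen

variable {𝒳 : Type*} [PseudoMetricSpace 𝒳] {T : 𝒳 → 𝒳} {n : ℕ} {ε : ℝ}

theorem dist_le_bowenMax (x y : 𝒳) {k : ℕ} (hk : k < n) :
    dist (T^[k] x) (T^[k] y) ≤ bowenMax T n x y := by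
  rw [dist_nndist, bowenMax, NNReal.coe_le_coe]
  exact Finset.le_sup (f := fun k => nndist (T^[k] x) (T^[k] y)) (Finset.mem_range.2 hk)

theorem bowenMax_lt_iff (hε : 0 < ε) (x y : 𝒳) :
    bowenMax T n x y < ε ↔ ∀ k < n, dist (T^[k] x) (T^[k] y) < ε := by
  lift ε to ℝ≥0 using hε.le
  rw [bowenMax, NNReal.coe_lt_coe,
    Finset.sup_lt_iff (bot_lt_iff_ne_bot.2 (by exact_mod_cast hε.ne'))]
  simp only [Finset.mem_range, ← NNReal.coe_lt_coe, coe_nndist]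

theorem bowenAvg_mul_natCast (x y : 𝒳) :
    bowenAvg T n x y * n = ∑ k ∈ Finset.range n, dist (T^[k] x) (T^[k] y) := by
  rcases Nat.eq_zero_or_pos n with rfl | hn
  · simp
  · exact div_mul_cancel₀ _ (by positivity)

theorem bowenAvg_le_bowenMax (x y : 𝒳) : bowenAvg T n x y ≤ bowenMax T n x y := by
  rcases Nat.eq_zero_or_pos n with rfl | hn
  · simp [bowenAvg, bowenMax]
  rw [← mul_le_mul_iff_left₀ (show (0 : ℝ) < n by positivity), bowenAvg_mul_natCast]
  simpa [mul_comm] using Finset.sum_le_card_nsmul _ _ _ fun k hk =>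
    dist_le_bowenMax (T := T) x y (Finset.mem_range.1 hk)

theorem bowenAvg_self (x : 𝒳) : bowenAvg T n x x = 0 := by
  simp [bowenAvg]

theorem continuous_bowenAvg (hT : Continuous T) :
    Continuous fun p : 𝒳 × 𝒳 => bowenAvg T n p.1 p.2 :=
  (continuous_finsetSum _ fun k _ =>
    ((hT.iterate k).comp continuous_fst).dist ((hT.iterate k).comp continuous_snd)).div_const _

theorem card_filter_le_ceil_of_bowenAvg_lt {τ : ℝ} (hε : 0 < ε) {x y : 𝒳}
    (h : bowenAvg T n x y < τ * ε) :
    (Finset.univ.filter fun k : Fin n => ε ≤ dist (T^[k] x) (T^[k] y)).card ≤ ⌈τ * n⌉₊ := by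
  set S := Finset.univ.filter fun k : Fin n => ε ≤ dist (T^[k] x) (T^[k] y)
  have hsum : S.card * ε ≤ τ * n * ε :=
    calc S.card * ε ≤ ∑ k ∈ S, dist (T^[k] x) (T^[k] y) := by
          simpa using Finset.card_nsmul_le_sum S _ ε fun k hk => (Finset.mem_filter.1 hk).2
      _ ≤ ∑ k : Fin n, dist (T^[k] x) (T^[k] y) :=
          Finset.sum_le_sum_of_subset_of_nonneg S.subset_univ fun _ _ _ => dist_nonneg
      _ = bowenAvg T n x y * n := by
          rw [bowenAvg_mul_natCast, Fin.sum_univ_eq_sum_range (fun k => dist (T^[k] x) (T^[k] y))]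
      _ ≤ τ * n * ε := by nlinarith [(Nat.cast_nonneg n : (0 : ℝ) ≤ n)]
  exact Nat.cast_le.1 (((mul_le_mul_iff_left₀ hε).1 hsum).trans (Nat.le_ceil _))

theorem IsFineOpenCover.iterate_pi {κ : Type*} {W : κ → Set 𝒳} (hW : IsFineOpenCover dist ε W)
    (hT : Continuous T) (hε : 0 < ε) :
    IsFineOpenCover (bowenMax T n) ε fun w : Fin n → κ => ⋂ k : Fin n, T^[k] ⁻¹' W (w k) := by
  refine ⟨fun w => isOpen_iInter_of_finite fun k => (hW.1 _).preimage (hT.iterate k),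
    fun x => ⟨fun k => (hW.2.1 (T^[k] x)).choose, mem_iInter.2 fun k =>
      (hW.2.1 (T^[k] x)).choose_spec⟩, fun w x hx y hy => ?_⟩
  rw [mem_iInter] at hx hy
  exact (bowenMax_lt_iff hε x y).2 fun k hk => hW.2.2 _ _ (hx ⟨k, hk⟩) _ (hy ⟨k, hk⟩)

end Bowen

section CompactCover

variable {𝒳 : Type*} [PseudoMetricSpace 𝒳] [CompactSpace 𝒳] {T : 𝒳 → 𝒳} {n : ℕ} {ε : ℝ}

theorem exists_isFineOpenCover_dist (hε : 0 < ε) :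
    ∃ W : Fin (coverNum 𝒳 dist ε) → Set 𝒳, IsFineOpenCover dist ε W :=
  let ⟨_, _, hU⟩ := exists_isFineOpenCover continuous_dist fun x => by simpa using hε
  exists_isFineOpenCover_coverNum hU

theorem exists_isFineOpenCover_bowenAvg (hT : Continuous T) (hε : 0 < ε) :
    ∃ E : Fin (coverNum 𝒳 (bowenAvg T n) ε) → Set 𝒳, IsFineOpenCover (bowenAvg T n) ε E :=
  let ⟨_, _, hU⟩ := exists_isFineOpenCover (continuous_bowenAvg hT) fun x => by
    simpa [bowenAvg_self] using hε
  exists_isFineOpenCover_coverNum hU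

theorem coverNum_bowenMax_le_pow (hT : Continuous T) (hε : 0 < ε) :
    coverNum 𝒳 (bowenMax T n) ε ≤ coverNum 𝒳 dist ε ^ n := by
  obtain ⟨W, hW⟩ := exists_isFineOpenCover_dist (𝒳 := 𝒳) hε
  simpa using (hW.iterate_pi (n := n) hT hε).coverNum_le

theorem coverNum_bowenAvg_le_bowenMax (hT : Continuous T) (hε : 0 < ε) :
    coverNum 𝒳 (bowenAvg T n) ε ≤ coverNum 𝒳 (bowenMax T n) ε :=
  let ⟨_, hW⟩ := exists_isFineOpenCover_dist (𝒳 := 𝒳) hε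
  coverNum_le_coverNum_of_le (hW.iterate_pi hT hε) bowenAvg_le_bowenMax

end CompactCover

section MarkedCover

abbrev Marking (n m : ℕ) (κ : Type*) := Σ S : {S : Finset (Fin n) // S.card ≤ m}, (S.1 → κ)

theorem card_marking_le (n m : ℕ) (κ : Type*) [Fintype κ] [Nonempty κ] :
    Fintype.card (Marking n m κ) ≤ 2 ^ n * Fintype.card κ ^ m := by
  rw [Fintype.card_sigma]
  calc ∑ S : {S : Finset (Fin n) // S.card ≤ m}, Fintype.card (S.1 → κ)
      ≤ ∑ _S : {S : Finset (Fin n) // S.card ≤ m}, Fintype.card κ ^ m :=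
        Finset.sum_le_sum fun S _ => by
          simpa using Nat.pow_le_pow_right Fintype.card_pos S.2
    _ ≤ 2 ^ n * Fintype.card κ ^ m := by
        rw [Finset.sum_const, smul_eq_mul, Finset.card_univ]
        gcongr
        simpa using Fintype.card_subtype_le (α := Finset (Fin n)) _

variable {𝒳 : Type*} [PseudoMetricSpace 𝒳] {ι κ : Type*} {n : ℕ}

def markedCover (T : 𝒳 → 𝒳) (n m : ℕ) (x₀ : ι → 𝒳) (E : ι → Set 𝒳) (W : κ → Set 𝒳) (ε : ℝ)
    (p : ι × Marking n m κ) : Set 𝒳 :=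
  E p.1 ∩ (⋂ k ∈ p.2.1.1ᶜ, T^[k] ⁻¹' Metric.ball (T^[k] (x₀ p.1)) ε) ∩
    ⋂ k : p.2.1.1, T^[k] ⁻¹' W (p.2.2 k)

theorem isFineOpenCover_markedCover {T : 𝒳 → 𝒳} (hT : Continuous T) {ε τ : ℝ} (hε : 0 < ε)
    {x₀ : ι → 𝒳} {E : ι → Set 𝒳} (hEo : ∀ j, IsOpen (E j)) (hEc : ∀ x, ∃ j, x ∈ E j)
    (hx₀ : ∀ j, ∀ y ∈ E j, bowenAvg T n (x₀ j) y < τ * ε)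
    {W : κ → Set 𝒳} (hW : IsFineOpenCover dist ε W) :
    IsFineOpenCover (bowenMax T n) (2 * ε) (markedCover T n ⌈τ * n⌉₊ x₀ E W ε) := by
  refine ⟨fun p => ?_, fun x => ?_, fun p y hy y' hy' => ?_⟩
  · unfold markedCover
    exact ((hEo _).inter (isOpen_biInter_finset fun (k : Fin n) _ =>
      Metric.isOpen_ball.preimage (hT.iterate k))).inter
      (isOpen_iInter_of_finite fun k : p.2.1.1 => (hW.1 _).preimage (hT.iterate _))
  · obtain ⟨j, hj⟩ := hEc x
    let S := Finset.univ.filter fun k : Fin n => ε ≤ dist (T^[k] (x₀ j)) (T^[k] x)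
    have hS : S.card ≤ ⌈τ * n⌉₊ := card_filter_le_ceil_of_bowenAvg_lt hε (hx₀ j x hj)
    refine ⟨⟨j, ⟨S, hS⟩, fun k => (hW.2.1 (T^[k] x)).choose⟩, ⟨hj, ?_⟩, ?_⟩
    · simp only [mem_iInter₂, mem_preimage, Metric.mem_ball, Finset.mem_compl]
      intro k hk
      rw [dist_comm]
      simpa [S] using hk
    · exact mem_iInter.2 fun k => (hW.2.1 _).choose_spec
  obtain ⟨j, ⟨S, _⟩, w⟩ := p
  obtain ⟨⟨-, hyx⟩, hyW⟩ := hy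
  obtain ⟨⟨-, hy'x⟩, hy'W⟩ := hy'
  simp only [mem_iInter, mem_preimage, Metric.mem_ball, Finset.mem_compl] at hyx hyW hy'x hy'W
  refine (bowenMax_lt_iff (by positivity) y y').2 fun k hk => ?_
  by_cases hkS : (⟨k, hk⟩ : Fin n) ∈ S
  · have := hW.2.2 _ _ (hyW ⟨_, hkS⟩) _ (hy'W ⟨_, hkS⟩)
    simp only at this
    linarith
  · calc dist (T^[k] y) (T^[k] y')
        ≤ dist (T^[k] y) (T^[k] (x₀ j)) + dist (T^[k] y') (T^[k] (x₀ j)) :=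
          dist_triangle_right _ _ _
      _ < ε + ε := add_lt_add (hyx _ hkS) (hy'x _ hkS)
      _ = 2 * ε := by ring

theorem coverNum_bowenMax_two_mul_le [CompactSpace 𝒳] [Nonempty 𝒳] {T : 𝒳 → 𝒳}
    (hT : Continuous T) {ε τ : ℝ} (hε : 0 < ε) (hτ : 0 < τ) :
    coverNum 𝒳 (bowenMax T n) (2 * ε) ≤
      coverNum 𝒳 (bowenAvg T n) (τ * ε) * (2 ^ n * coverNum 𝒳 dist ε ^ ⌈τ * n⌉₊) := by
  obtain ⟨W, hW⟩ := exists_isFineOpenCover_dist (𝒳 := 𝒳) hε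
  obtain ⟨E, hE⟩ := exists_isFineOpenCover_bowenAvg (n := n) hT (mul_pos hτ hε)
  have hcentre : ∀ j, ∃ x₀, ∀ y ∈ E j, bowenAvg T n x₀ y < τ * ε := fun j =>
    (E j).eq_empty_or_nonempty.elim (fun h => ⟨Classical.arbitrary 𝒳, by simp [h]⟩)
      fun ⟨x₀, hx₀⟩ => ⟨x₀, fun y hy => hE.2.2 j _ hx₀ _ hy⟩
  choose x₀ hx₀ using hcentre
  have : Nonempty (Fin (coverNum 𝒳 dist ε)) := Fintype.card_pos_iff.1 hW.card_pos
  calc coverNum 𝒳 (bowenMax T n) (2 * ε)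
      ≤ Fintype.card (Fin (coverNum 𝒳 (bowenAvg T n) (τ * ε)) ×
          Marking n ⌈τ * n⌉₊ (Fin (coverNum 𝒳 dist ε))) :=
        (isFineOpenCover_markedCover hT hε hE.1 hE.2.1 hx₀ hW).coverNum_le
    _ ≤ _ := by
        rw [Fintype.card_prod, Fintype.card_fin]
        simpa using Nat.mul_le_mul_left _ (card_marking_le n ⌈τ * n⌉₊ (Fin _))

end MarkedCover

section GrowthRates

variable {𝒳 : Type*} [MetricSpace 𝒳] [CompactSpace 𝒳] {T : 𝒳 → 𝒳} {ε : ℝ}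

theorem log_coverNum_bowenMax_div_le (hT : Continuous T) (hε : 0 < ε) (n : ℕ) :
    Real.log (coverNum 𝒳 (bowenMax T n) ε) / n ≤ Real.log (coverNum 𝒳 dist ε) := by
  rcases n.eq_zero_or_pos with rfl | hn
  · simpa using Real.log_natCast_nonneg _
  rw [div_le_iff₀ (by positivity), mul_comm, ← Real.log_pow]
  exact_mod_cast Real.log_natCast_le_log_natCast_s14 (coverNum_bowenMax_le_pow hT hε)

theorem log_coverNum_bowenAvg_div_le_bowenMax (hT : Continuous T) (hε : 0 < ε) (n : ℕ) :
    Real.log (coverNum 𝒳 (bowenAvg T n) ε) / n ≤ Real.log (coverNum 𝒳 (bowenMax T n) ε) / n :=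
  div_le_div_of_nonneg_right
    (Real.log_natCast_le_log_natCast_s14 (coverNum_bowenAvg_le_bowenMax hT hε)) n.cast_nonneg

theorem SAvg_nonneg (hT : Continuous T) (hε : 0 < ε) : 0 ≤ SAvg T ε := by
  unfold SAvg
  exact le_limsup_of_frequently_le
    (Frequently.of_forall fun n => log_coverNum_div_nonneg (bowenAvg T n) ε n)
    (isBoundedUnder_of ⟨_, fun n =>
      (log_coverNum_bowenAvg_div_le_bowenMax hT hε n).trans (log_coverNum_bowenMax_div_le hT hε n)⟩)

theorem SAvg_le_SMax (hT : Continuous T) (hε : 0 < ε) : SAvg T ε ≤ SMax T ε := by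
  unfold SAvg SMax
  exact limsup_le_limsup (Eventually.of_forall (log_coverNum_bowenAvg_div_le_bowenMax hT hε))
    (isCoboundedUnder_le_of_le _ fun n => log_coverNum_div_nonneg (bowenAvg T n) ε n)
    (isBoundedUnder_of ⟨_, log_coverNum_bowenMax_div_le hT hε⟩)

theorem log_coverNum_bowenMax_two_mul_div_le [Nonempty 𝒳] (hT : Continuous T) {τ : ℝ}
    (hε : 0 < ε) (hτ : 0 < τ) {n : ℕ} (hn : 0 < n) :
    Real.log (coverNum 𝒳 (bowenMax T n) (2 * ε)) / n ≤
      Real.log (coverNum 𝒳 (bowenAvg T n) (τ * ε)) / n +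
        (Real.log 2 + τ * Real.log (coverNum 𝒳 dist ε) + Real.log (coverNum 𝒳 dist ε) / n) := by
  set C := coverNum 𝒳 (bowenAvg T n) (τ * ε)
  set K := coverNum 𝒳 dist ε
  have hC : 0 < (C : ℝ) := by
    obtain ⟨E, hE⟩ := exists_isFineOpenCover_bowenAvg (n := n) hT (mul_pos hτ hε)
    simpa using hE.card_pos
  have hK : 0 < (K : ℝ) := by
    obtain ⟨W, hW⟩ := exists_isFineOpenCover_dist (𝒳 := 𝒳) hε
    simpa using hW.card_pos
  have hm : (⌈τ * n⌉₊ : ℝ) ≤ τ * n + 1 := (Nat.ceil_lt_add_one (by positivity)).le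
  have hlogK := Real.log_natCast_nonneg K
  calc Real.log (coverNum 𝒳 (bowenMax T n) (2 * ε)) / n
      ≤ Real.log (C * (2 ^ n * K ^ ⌈τ * n⌉₊) : ℕ) / n :=
        div_le_div_of_nonneg_right (Real.log_natCast_le_log_natCast_s14
          (coverNum_bowenMax_two_mul_le hT hε hτ)) n.cast_nonneg
    _ = (Real.log C + n * Real.log 2 + ⌈τ * n⌉₊ * Real.log K) / n := by
        push_cast
        rw [Real.log_mul hC.ne' (by positivity), Real.log_mul (by positivity) (by positivity),
          Real.log_pow, Real.log_pow, add_assoc]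
    _ ≤ (Real.log C + n * Real.log 2 + (τ * n + 1) * Real.log K) / n := by gcongr
    _ = Real.log C / n + (Real.log 2 + τ * Real.log K + Real.log K / n) := by
        field_simp
        ring

theorem SMax_two_mul_le (hT : Continuous T) {τ : ℝ} (hε : 0 < ε) (hτ : 0 < τ) :
    SMax T (2 * ε) ≤ SAvg T (τ * ε) + (Real.log 2 + τ * Real.log (coverNum 𝒳 dist ε)) := by
  rcases isEmpty_or_nonempty 𝒳 with h𝒳 | h𝒳
  · simp [SMax, SAvg, coverNum_eq_zero_of_isEmpty]
    positivity
  unfold SMax SAvg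
  refine limsup_le_limsup_add_of_tendsto ((eventually_gt_atTop 0).mono fun n hn =>
      log_coverNum_bowenMax_two_mul_div_le hT hε hτ hn)
    (by simpa using tendsto_const_nhds.add (tendsto_const_div_atTop_nhds_zero_nat
      (Real.log (coverNum 𝒳 dist ε))))
    (isCoboundedUnder_le_of_le _ fun n => log_coverNum_div_nonneg (bowenMax T n) (2 * ε) n)
    (isBoundedUnder_of ⟨_, fun n =>
      (log_coverNum_bowenAvg_div_le_bowenMax hT (mul_pos hτ hε) n).trans
        (log_coverNum_bowenMax_div_le hT (mul_pos hτ hε) n)⟩)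
    (isBoundedUnder_of ⟨0, fun n => log_coverNum_div_nonneg (bowenAvg T n) (τ * ε) n⟩)

end GrowthRates

section Scaling

variable {𝒳 : Type*} [MetricSpace 𝒳] [CompactSpace 𝒳] {T : 𝒳 → 𝒳} {δ : ℝ}

theorem eventually_SMax_le_SAvg_div_two_rpow (hT : Continuous T)
    (htame : Tendsto (fun ε : ℝ => ε ^ δ * Real.log (coverNum 𝒳 dist ε)) (𝓝[>] 0) (𝓝 0)) :
    ∀ᶠ ε in 𝓝[>] 0, SMax T ε ≤ SAvg T ((ε / 2) ^ (1 + δ)) + (Real.log 2 + 1) := by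
  have hhalf : Tendsto (fun ε : ℝ => ε / 2) (𝓝[>] 0) (𝓝[>] 0) :=
    tendsto_nhdsGT_zero_of_continuousAt (continuousAt_id.div_const 2) (zero_div 2)
      fun x hx => by positivity
  filter_upwards [(htame.comp hhalf).eventually_le_const one_pos, self_mem_nhdsWithin]
    with ε hK (hε : 0 < ε)
  have h := SMax_two_mul_le hT (half_pos hε) (Real.rpow_pos_of_pos (half_pos hε) δ)
  rw [mul_div_cancel₀ _ two_ne_zero, ← Real.rpow_add_one (half_pos hε).ne', add_comm δ] at h
  simp only [Function.comp_apply] at hK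
  linarith

theorem eventually_SMax_div_abs_log_le (hT : Continuous T) (hδ : 0 < δ)
    (htame : Tendsto (fun ε : ℝ => ε ^ δ * Real.log (coverNum 𝒳 dist ε)) (𝓝[>] 0) (𝓝 0)) :
    ∀ᶠ ε in 𝓝[>] 0, SMax T ε / |Real.log ε| ≤
      (1 + δ) ^ 2 * (SAvg T ((ε / 2) ^ (1 + δ)) / |Real.log ((ε / 2) ^ (1 + δ))|) + δ := by
  have hlarge : ∀ᶠ ε in 𝓝[>] (0 : ℝ), (Real.log 2 + 1) / δ ≤ |Real.log ε| :=
    (tendsto_abs_atBot_atTop.comp Real.tendsto_log_nhdsGT_zero).eventually_ge_atTop _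
  filter_upwards [eventually_SMax_le_SAvg_div_two_rpow hT htame, hlarge,
    Ioo_mem_nhdsGT one_pos] with ε hS hL ⟨hε, hε1⟩
  rw [div_le_iff₀ hδ] at hL
  set A := SAvg T ((ε / 2) ^ (1 + δ))
  set L := |Real.log ε|
  have hA : 0 ≤ A := SAvg_nonneg hT (by positivity)
  have hLpos : 0 < L := abs_pos.2 (Real.log_neg hε hε1).ne
  have hlog2 : 0 < Real.log 2 := Real.log_pos one_lt_two
  have hAL : A / L ≤ (1 + δ) * A / (L + Real.log 2) := by
    rw [div_le_div_iff₀ hLpos (by positivity)]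
    nlinarith
  rw [abs_log_div_two_rpow hε hε1 (by positivity)]
  calc SMax T ε / L ≤ A / L + (Real.log 2 + 1) / L := by rw [← add_div]; gcongr
    _ ≤ (1 + δ) * A / (L + Real.log 2) + δ := add_le_add hAL ((div_le_iff₀ hLpos).2 (by linarith))
    _ = (1 + δ) ^ 2 * (A / ((1 + δ) * (L + Real.log 2))) + δ := by
        field_simp

end Scaling

/-- Under tame growth of covering numbers, the upper and lower metric mean dimensions can
be computed using the time-averaged metrics `d̄_n` instead of the sup-metrics `d_n`. -/
theorem mdim_eq_avg_of_tame_growth {𝒳 : Type*} [MetricSpace 𝒳] [CompactSpace 𝒳]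
    (T : 𝒳 → 𝒳) (hT : Continuous T)
    (htame : ∀ δ : ℝ, 0 < δ →
      Tendsto (fun ε : ℝ => ε ^ δ * Real.log (coverNum 𝒳 dist ε)) (𝓝[>] (0 : ℝ)) (𝓝 0)) :
    Filter.limsup (fun ε : ℝ => SMax (𝒳 := 𝒳) T ε / |Real.log ε|) (𝓝[>] (0 : ℝ))
        = Filter.limsup (fun ε : ℝ => SAvg (𝒳 := 𝒳) T ε / |Real.log ε|) (𝓝[>] (0 : ℝ)) ∧
      Filter.liminf (fun ε : ℝ => SMax (𝒳 := 𝒳) T ε / |Real.log ε|) (𝓝[>] (0 : ℝ))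
        = Filter.liminf (fun ε : ℝ => SAvg (𝒳 := 𝒳) T ε / |Real.log ε|) (𝓝[>] (0 : ℝ)) := by
  refine limsup_eq_and_liminf_eq_of_le_rescale ?_ fun δ hδ =>
    ⟨_, map_div_two_rpow_nhdsGT_zero (by linarith),
      eventually_SMax_div_abs_log_le hT hδ (htame δ hδ)⟩
  filter_upwards [self_mem_nhdsWithin] with ε (hε : 0 < ε)
  exact div_le_div_of_nonneg_right (SAvg_le_SMax hT hε) (abs_nonneg _)
end

section
/- Let r(ε) be the infimum of I(U;V) over pairs of [0,1]-valued random variables U, V with U uniformly distributed on [0,1] and E|U - V| ≤ ε. Then r(ε) ~ |log ε| as ε → 0, i.e., lim_{ε→0} r(ε)/|log ε| = 1. -/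
open MeasureTheory ProbabilityTheory Real Filter Set Topology
open scoped ENNReal NNReal

noncomputable def miPartitionSum {Ω 𝒳 𝒴 : Type*} [MeasureSpace Ω] {M N : ℕ}
    (X : Ω → 𝒳) (Y : Ω → 𝒴) (f : 𝒳 → Fin M) (g : 𝒴 → Fin N) : ℝ :=
  ∑ m : Fin M, ∑ n : Fin N,
    (ℙ {ω | f (X ω) = m ∧ g (Y ω) = n}).toReal *
      Real.log ((ℙ {ω | f (X ω) = m ∧ g (Y ω) = n}).toReal /
        ((ℙ {ω | f (X ω) = m}).toReal * (ℙ {ω | g (Y ω) = n}).toReal))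

/-- Mutual information as a supremum over finite measurable partitions. -/
noncomputable def mutualInformation {Ω 𝒳 𝒴 : Type*} [MeasureSpace Ω]
    [MeasurableSpace 𝒳] [MeasurableSpace 𝒴] (X : Ω → 𝒳) (Y : Ω → 𝒴) : ℝ≥0∞ :=
  ⨆ (M : ℕ) (N : ℕ) (f : 𝒳 → Fin M) (g : 𝒴 → Fin N) (_ : Measurable f) (_ : Measurable g),
    ENNReal.ofReal (miPartitionSum X Y f g)

/-- `r(ε)`: the infimum of `I(U;V)` over `[0,1]`-valued random variables `U, V` (on some
probability space) with `U` uniform on `[0,1]` and `E|U - V| ≤ ε`. -/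
noncomputable def rUnif (ε : ℝ) : ℝ≥0∞ :=
  sInf {c : ℝ≥0∞ | ∃ (Ω : Type) (_ : MeasureSpace Ω),
    IsProbabilityMeasure (ℙ : Measure Ω) ∧ ∃ U V : Ω → ℝ,
      Measurable U ∧ Measurable V ∧
      (∀ ω, U ω ∈ Set.Icc (0 : ℝ) 1) ∧ (∀ ω, V ω ∈ Set.Icc (0 : ℝ) 1) ∧
      Measure.map U ℙ = volume.restrict (Set.Icc (0 : ℝ) 1) ∧
      (∫ ω, |U ω - V ω| ∂ℙ) ≤ ε ∧
      c = mutualInformation U V}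

/-!
Upper bound: rounding `U` to the midpoint of its cell among `⌈1/(2ε)⌉` equal cells of `[0,1]`
moves it by at most `ε`, and the rounded variable takes at most `1/ε` values, so
`I(U;V) ≤ log (1/ε)`.

Lower bound: quantize both `U` and `V` into `K ≈ 1/(ε log² ε)` equal cells. The cells of `U`
are equiprobable, and by Markov's inequality the quantized pair falls off the band
`|m - n| ≤ 1` with probability at most `Kε ≈ 1/log² ε`. Gibbs' inequality against the kernel
giving mass `1/6` to each band cell and `1/(2K)` to every other cell turns this into the
Fano-type bound `I(U;V) ≥ log K - log 6 - Kε log (2K) = |log ε| - O(log |log ε|)`.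
-/

open Finset

lemma mul_log_div_le {q B r : ℝ} (hq : 0 ≤ q) (hqB : q ≤ B) (hr : 0 < r) :
    q * log (B / q) ≤ B * r - q - q * log r := by
  rcases hq.eq_or_lt with rfl | hq
  · simpa using mul_nonneg hqB hr.le
  have hB : 0 < B := hq.trans_le hqB
  have hsplit : log (B / q) = log (B * r / q) - log r := by
    rw [← log_div (by positivity) hr.ne']
    congr 1
    field_simp
  have hlog : q * log (B * r / q) ≤ B * r - q := by
    have := mul_le_mul_of_nonneg_left (log_le_sub_one_of_pos (by positivity : 0 < B * r / q)) hq.le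
    rwa [mul_sub, mul_div_cancel₀ _ hq.ne', mul_one] at this
  rw [hsplit, mul_sub]
  linarith

/-- Gibbs' inequality, for an unnormalised `q` and a subprobability `r`. -/
lemma sum_mul_log_div_le_sum_mul_log_inv {ι : Type*} (s : Finset ι) {q r : ι → ℝ}
    (hq : ∀ i ∈ s, 0 ≤ q i) (hr : ∀ i ∈ s, 0 < r i) (hr1 : ∑ i ∈ s, r i ≤ 1) :
    ∑ i ∈ s, q i * log ((∑ j ∈ s, q j) / q i) ≤ ∑ i ∈ s, q i * log (1 / r i) := by
  set B := ∑ j ∈ s, q j with hB_def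
  have hB : 0 ≤ B := sum_nonneg hq
  calc ∑ i ∈ s, q i * log (B / q i)
      ≤ ∑ i ∈ s, (B * r i - q i - q i * log (r i)) :=
        sum_le_sum fun i hi => mul_log_div_le (hq i hi) (single_le_sum hq hi) (hr i hi)
    _ = B * (∑ i ∈ s, r i - 1) + ∑ i ∈ s, q i * log (1 / r i) := by
        simp only [sum_sub_distrib, ← mul_sum, one_div, log_inv, mul_neg, sum_neg_distrib]
        rw [← hB_def]
        ring
    _ ≤ ∑ i ∈ s, q i * log (1 / r i) := by
        nlinarith [mul_le_mul_of_nonneg_left hr1 hB]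

lemma sum_mul_log_inv_le_log_card {ι : Type*} [Fintype ι] {b : ι → ℝ} {S : Finset ι}
    (hb0 : ∀ n, 0 ≤ b n) (hb : ∑ n, b n = 1) (hS : ∀ n ∉ S, b n = 0) :
    ∑ n, b n * log (1 / b n) ≤ log #S := by
  have hbS : ∑ n ∈ S, b n = 1 := by
    rw [← hb]
    exact sum_subset (subset_univ S) fun n _ hn => hS n hn
  have hcard : (0 : ℝ) < #S := by
    exact_mod_cast (nonempty_of_sum_ne_zero (hbS ▸ one_ne_zero : ∑ n ∈ S, b n ≠ 0)).card_pos
  calc ∑ n, b n * log (1 / b n) = ∑ n ∈ S, b n * log (1 / b n) :=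
        (sum_subset (subset_univ S) fun n _ hn => by simp [hS n hn]).symm
    _ ≤ ∑ n ∈ S, b n * log (1 / (1 / #S)) := by
        have := sum_mul_log_div_le_sum_mul_log_inv S (q := b) (r := fun _ => 1 / (#S : ℝ))
          (fun n _ => hb0 n) (fun _ _ => by positivity) (by simp [hcard.ne'])
        rwa [hbS] at this
    _ = log #S := by rw [← sum_mul, hbS, one_div_one_div, one_mul]

lemma sum_sum_mul_log_div_le_log_card {ι κ : Type*} [Fintype ι] [Fintype κ]
    {p : ι → κ → ℝ} {a : ι → ℝ} {b : κ → ℝ} {S : Finset κ}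
    (hp : ∀ m n, 0 ≤ p m n) (hpa : ∀ m n, p m n ≤ a m) (hpb : ∀ n, ∑ m, p m n = b n)
    (hb : ∑ n, b n = 1) (hS : ∀ n ∉ S, b n = 0) :
    ∑ m, ∑ n, p m n * log (p m n / (a m * b n)) ≤ log #S := by
  have hpb' : ∀ m n, p m n ≤ b n := fun m n =>
    hpb n ▸ single_le_sum (fun i _ => hp i n) (mem_univ m)
  have hb0 : ∀ n, 0 ≤ b n := fun n => hpb n ▸ sum_nonneg fun m _ => hp m n
  have hterm : ∀ m n, p m n * log (p m n / (a m * b n)) ≤ p m n * log (1 / b n) := by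
    intro m n
    rcases (hp m n).eq_or_lt with h0 | h0
    · simp [← h0]
    have hbn : 0 < b n := h0.trans_le (hpb' m n)
    have ham : 0 < a m := h0.trans_le (hpa m n)
    refine mul_le_mul_of_nonneg_left (log_le_log (by positivity) ?_) h0.le
    rw [div_le_div_iff₀ (by positivity) hbn]
    nlinarith [hpa m n]
  calc ∑ m, ∑ n, p m n * log (p m n / (a m * b n))
      ≤ ∑ m, ∑ n, p m n * log (1 / b n) := sum_le_sum fun m _ => sum_le_sum fun n _ => hterm m n
    _ = ∑ n, b n * log (1 / b n) := by
        rw [sum_comm]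
        simp only [← sum_mul, hpb]
    _ ≤ log #S := sum_mul_log_inv_le_log_card hb0 hb hS

lemma sum_ite_one_div_two_mul_le_one {ι : Type*} [Fintype ι] (P : ι → Prop) [DecidablePred P] {d : ℕ}
    (hd : #{m | P m} ≤ d) :
    ∑ m, (if P m then 1 / (2 * d) else 1 / (2 * Fintype.card ι) : ℝ) ≤ 1 := by
  simp only [sum_ite, sum_const, nsmul_eq_mul]
  have hP : (#{m | P m} : ℝ) * (1 / (2 * d)) ≤ 1 / 2 := by
    rcases Nat.eq_zero_or_pos d with hd0 | hd0
    · simp [hd0]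
    rw [mul_one_div, div_le_iff₀ (by positivity)]
    have : (#{m | P m} : ℝ) ≤ d := by exact_mod_cast hd
    linarith
  have hnP : (#{m | ¬P m} : ℝ) * (1 / (2 * Fintype.card ι)) ≤ 1 / 2 := by
    rcases isEmpty_or_nonempty ι with hι | hι
    · simp
    rw [mul_one_div, div_le_iff₀ (by positivity)]
    have : (#{m | ¬P m} : ℝ) ≤ Fintype.card ι := Nat.cast_le.mpr (card_le_univ _)
    linarith
  linarith

/-- The conditional-entropy half of Fano's inequality: Gibbs' inequality in each column
against mass `1/(2d)` on `R` and `1/(2K)` elsewhere. -/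
lemma sum_sum_mul_log_div_le_of_forall_card_le {ι : Type*} [Fintype ι] (R : ι → ι → Prop)
    [DecidableRel R] {d : ℕ} (hd : ∀ n, #{m | R m n} ≤ d) {p : ι → ι → ℝ} {b : ι → ℝ} {e : ℝ}
    (hp : ∀ m n, 0 ≤ p m n) (hpb : ∀ n, ∑ m, p m n = b n) (htot : ∑ m, ∑ n, p m n = 1)
    (hbad : ∑ m, ∑ n, (if R m n then 0 else p m n) ≤ e) :
    ∑ n, ∑ m, p m n * log (b n / p m n) ≤ log (2 * d) + e * log (2 * Fintype.card ι) := by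
  set K : ℝ := (Fintype.card ι : ℝ)
  have hcol : ∀ n, ∑ m, p m n * log (b n / p m n) ≤
      ∑ m, (if R m n then p m n * log (2 * d) else p m n * log (2 * K)) := by
    intro n
    have hr : ∀ m ∈ Finset.univ, 0 < (if R m n then 1 / (2 * d) else 1 / (2 * K) : ℝ) := by
      intro m _
      split_ifs with h
      · have : 0 < d := (card_pos.mpr ⟨m, by simpa using h⟩).trans_le (hd n)
        positivity
      · have : Nonempty ι := ⟨m⟩
        positivity
    have := sum_mul_log_div_le_sum_mul_log_inv univ (fun m _ => hp m n) hr
      (sum_ite_one_div_two_mul_le_one (R · n) (hd n))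
    rw [hpb] at this
    refine this.trans (le_of_eq (sum_congr rfl fun m _ => ?_))
    split_ifs <;> simp [K]
  have hgood : ∑ n, ∑ m, (if R m n then p m n else 0) ≤ 1 := by
    rw [← htot, sum_comm]
    exact sum_le_sum fun m _ => sum_le_sum fun n _ => by split_ifs <;> simp [hp m n]
  have hlog2d : 0 ≤ log (2 * d) := by exact_mod_cast log_natCast_nonneg (2 * d)
  have hlog2K : 0 ≤ log (2 * K) := by
    simpa [K] using log_natCast_nonneg (2 * Fintype.card ι)
  calc ∑ n, ∑ m, p m n * log (b n / p m n)
      ≤ ∑ n, ∑ m, (if R m n then p m n * log (2 * d) else p m n * log (2 * K)) :=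
        sum_le_sum fun n _ => hcol n
    _ = log (2 * d) * ∑ n, ∑ m, (if R m n then p m n else 0) +
          log (2 * K) * ∑ m, ∑ n, (if R m n then 0 else p m n) := by
        rw [sum_comm (f := fun m n => if R m n then 0 else p m n), mul_sum, mul_sum,
          ← sum_add_distrib]
        refine sum_congr rfl fun n _ => ?_
        rw [mul_sum, mul_sum, ← sum_add_distrib]
        refine sum_congr rfl fun m _ => ?_
        split_ifs <;> ring
    _ ≤ log (2 * d) + e * log (2 * K) := by
        nlinarith [mul_le_mul_of_nonneg_left hgood hlog2d, mul_le_mul_of_nonneg_left hbad hlog2K]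

/-- A Fano-type inequality. -/
lemma log_card_sub_le_sum_sum_mul_log_div {ι : Type*} [Fintype ι] [Nonempty ι]
    (R : ι → ι → Prop) [DecidableRel R] {d : ℕ} (hd : ∀ n, #{m | R m n} ≤ d)
    {p : ι → ι → ℝ} {b : ι → ℝ} {e : ℝ}
    (hp : ∀ m n, 0 ≤ p m n) (hpb : ∀ n, ∑ m, p m n = b n) (htot : ∑ m, ∑ n, p m n = 1)
    (hbad : ∑ m, ∑ n, (if R m n then 0 else p m n) ≤ e) :
    log (Fintype.card ι) - log (2 * d) - e * log (2 * Fintype.card ι) ≤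
      ∑ m, ∑ n, p m n * log (p m n / (1 / Fintype.card ι * b n)) := by
  set K : ℝ := (Fintype.card ι : ℝ)
  have hK : 0 < K := by positivity
  have hsplit : ∀ m n, p m n * log (p m n / (1 / K * b n)) =
      p m n * log K - p m n * log (b n / p m n) := by
    intro m n
    rcases (hp m n).eq_or_lt with h0 | h0
    · simp [← h0]
    have hbn : 0 < b n := h0.trans_le (hpb n ▸ single_le_sum (fun i _ => hp i n) (mem_univ m))
    rw [← mul_sub, ← log_div hK.ne' (by positivity)]
    congr 2
    field_simp
  have htot' : ∑ m, ∑ n, p m n * log K = log K := by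
    simp only [← sum_mul, htot, one_mul]
  simp only [hsplit, sum_sub_distrib, htot']
  rw [sum_comm (f := fun m n => p m n * log (b n / p m n))]
  linarith [sum_sum_mul_log_div_le_of_forall_card_le R hd hp hpb htot hbad]

/-- The index of the cell of `x` in the partition of `[0,1]` into `K` intervals of length `1/K`
(the point `1` lies in the last cell). -/
noncomputable def quant (K : ℕ) [NeZero K] (x : ℝ) : Fin K :=
  ⟨min (K - 1) ⌊x * K⌋₊, by have := NeZero.pos K; omega⟩

section Quant

variable {K : ℕ} [NeZero K]

lemma measurable_quant : Measurable (quant K) := by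
  change Measurable ((fun n : ℕ => (⟨min (K - 1) n, by have := NeZero.pos K; omega⟩ : Fin K)) ∘
    fun x : ℝ => ⌊x * K⌋₊)
  exact measurable_from_top.comp (Nat.measurable_floor.comp (measurable_id.mul_const _))

lemma quant_le_mul {x : ℝ} (hx : 0 ≤ x) : (quant K x : ℝ) ≤ x * K :=
  calc (quant K x : ℝ) ≤ ⌊x * K⌋₊ := by exact_mod_cast min_le_right (K - 1) _
    _ ≤ x * K := Nat.floor_le (by positivity)

lemma mul_le_quant_add_one {x : ℝ} (hx : x ≤ 1) : x * K ≤ quant K x + 1 := by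
  rcases le_total (K - 1) ⌊x * K⌋₊ with h | h
  · have hq : (quant K x : ℕ) + 1 = K := by
      simp only [quant, min_eq_left h]
      have := NeZero.pos K
      omega
    rw [← Nat.cast_add_one, hq]
    nlinarith [(Nat.cast_pos.mpr (NeZero.pos K) : (0 : ℝ) < K)]
  · have hq : (quant K x : ℕ) = ⌊x * K⌋₊ := by simp [quant, min_eq_right h]
    rw [hq]
    exact (Nat.lt_floor_add_one _).le

lemma Ioo_subset_quant_preimage (m : Fin K) :
    Ioo ((m : ℝ) / K) ((m + 1) / K) ⊆ quant K ⁻¹' {m} ∩ Icc 0 1 := by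
  have hK : (0 : ℝ) < K := Nat.cast_pos.mpr (NeZero.pos K)
  rintro x ⟨hlo, hhi⟩
  rw [div_lt_iff₀ hK] at hlo
  rw [lt_div_iff₀ hK] at hhi
  have hm : ((m : ℕ) : ℝ) + 1 ≤ K := by exact_mod_cast m.isLt
  have hx0 : 0 ≤ x := by nlinarith [(Nat.cast_nonneg (m : ℕ) : (0 : ℝ) ≤ m)]
  have hfloor : ⌊x * K⌋₊ = m := (Nat.floor_eq_iff (by positivity)).mpr ⟨hlo.le, hhi⟩
  refine ⟨Fin.ext ?_, hx0, by nlinarith⟩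
  simp only [quant, hfloor]
  omega

lemma quant_preimage_subset_Icc (m : Fin K) :
    quant K ⁻¹' {m} ∩ Icc 0 1 ⊆ Icc ((m : ℝ) / K) ((m + 1) / K) := by
  have hK : (0 : ℝ) < K := Nat.cast_pos.mpr (NeZero.pos K)
  rintro x ⟨rfl, hx0, hx1⟩
  rw [Set.mem_Icc, div_le_iff₀ hK, le_div_iff₀ hK]
  exact ⟨quant_le_mul hx0, mul_le_quant_add_one hx1⟩

lemma volume_quant_preimage_inter_Icc (m : Fin K) :
    volume (quant K ⁻¹' {m} ∩ Icc 0 1) = ENNReal.ofReal (1 / K) := by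
  have hlen : ((m : ℝ) + 1) / K - m / K = 1 / K := by ring
  apply le_antisymm
  · simpa [hlen] using measure_mono (μ := volume) (quant_preimage_subset_Icc m)
  · simpa [hlen] using measure_mono (μ := volume) (Ioo_subset_quant_preimage m)

lemma quant_midpoint_mem_Icc (x : ℝ) : ((quant K x : ℝ) + 1 / 2) / K ∈ Icc (0 : ℝ) 1 := by
  have hK : (0 : ℝ) < K := Nat.cast_pos.mpr (NeZero.pos K)
  have : ((quant K x : ℕ) : ℝ) + 1 ≤ K := by exact_mod_cast (quant K x).isLt
  constructor
  · positivity
  · rw [div_le_one hK]; linarith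

lemma abs_sub_quant_midpoint_le {x : ℝ} (hx : x ∈ Icc (0 : ℝ) 1) :
    |x - ((quant K x : ℝ) + 1 / 2) / K| ≤ 1 / (2 * K) := by
  have hK : (0 : ℝ) < K := Nat.cast_pos.mpr (NeZero.pos K)
  have h1 := quant_le_mul (K := K) hx.1
  have h2 := mul_le_quant_add_one (K := K) hx.2
  have hmid : |x * K - quant K x - 1 / 2| ≤ 1 / 2 := abs_le.mpr ⟨by linarith, by linarith⟩
  rw [show x - ((quant K x : ℝ) + 1 / 2) / K = (x * K - quant K x - 1 / 2) / K by
    field_simp; ring, abs_div, abs_of_pos hK, div_le_iff₀ hK]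
  calc |x * K - quant K x - 1 / 2| ≤ 1 / 2 := hmid
    _ = 1 / (2 * K) * K := by field_simp

lemma inv_le_abs_sub_of_one_lt_abs_quant_sub {x y : ℝ} (hx : x ∈ Icc (0 : ℝ) 1)
    (hy : y ∈ Icc (0 : ℝ) 1) (h : 1 < |((quant K x : ℕ) : ℤ) - (quant K y : ℕ)|) :
    1 / K ≤ |x - y| := by
  have hK : (0 : ℝ) < K := Nat.cast_pos.mpr (NeZero.pos K)
  have h2 : (2 : ℝ) ≤ |((quant K x : ℕ) : ℝ) - (quant K y : ℕ)| := by exact_mod_cast h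
  have hx' := quant_le_mul (K := K) hx.1
  have hx'' := mul_le_quant_add_one (K := K) hx.2
  have hy' := quant_le_mul (K := K) hy.1
  have hy'' := mul_le_quant_add_one (K := K) hy.2
  have hfar : 1 ≤ |x * K - y * K| := by
    rw [le_abs] at h2 ⊢
    rcases h2 with h2 | h2
    · left; linarith
    · right; linarith
  rwa [← sub_mul, abs_mul, abs_of_pos hK, ← div_le_iff₀ hK] at hfar

end Quant

lemma card_filter_abs_sub_le_one_le_three {K : ℕ} (n : Fin K) :
    #{m : Fin K | |((m : ℕ) : ℤ) - (n : ℕ)| ≤ 1} ≤ 3 := by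
  calc #{m : Fin K | |((m : ℕ) : ℤ) - (n : ℕ)| ≤ 1}
      ≤ #(Icc ((n : ℕ) - 1 : ℤ) ((n : ℕ) + 1)) := by
        refine card_le_card_of_injOn (fun m => ((m : ℕ) : ℤ)) (fun m hm => ?_)
          (fun m _ m' _ h => Fin.ext (by simpa using h))
        simp only [coe_filter, Finset.mem_univ, true_and, abs_le, Set.mem_ofPred_eq] at hm
        simp only [coe_Icc, Set.mem_Icc]
        omega
    _ = 3 := by rw [Int.card_Icc]; omega

section Partition

variable {Ω 𝒳 𝒴 : Type*} [MeasureSpace Ω]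

lemma sum_toReal_measure_inter_preimage_singleton {ι : Type*} [Fintype ι] [MeasurableSpace ι]
    [MeasurableSingletonClass ι] {μ : Measure Ω} [IsFiniteMeasure μ] {W : Ω → ι}
    (hW : Measurable W) (A : Set Ω) : ∑ i, (μ (A ∩ W ⁻¹' {i})).toReal = (μ A).toReal := by
  have := sum_measureReal_preimage_singleton (μ := μ.restrict A) univ
    (fun i _ => hW (measurableSet_singleton i))
  simpa [measureReal_def, Measure.restrict_apply (hW (measurableSet_singleton _)),
    Set.inter_comm] using this

variable [IsProbabilityMeasure (ℙ : Measure Ω)] {M N : ℕ} {X : Ω → 𝒳} {Y : Ω → 𝒴}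
  {f : 𝒳 → Fin M} {g : 𝒴 → Fin N}

lemma sum_toReal_measure_cell_left (hf : Measurable (f ∘ X)) (n : Fin N) :
    ∑ m, (ℙ {ω | f (X ω) = m ∧ g (Y ω) = n}).toReal = (ℙ {ω | g (Y ω) = n}).toReal := by
  rw [← sum_toReal_measure_inter_preimage_singleton hf]
  simp only [Set.preimage, Function.comp_apply, Set.mem_singleton_iff, Set.inter_ofPred_eq_sep,
    Set.mem_ofPred_eq, and_comm]

lemma sum_toReal_measure_cell_right (hg : Measurable (g ∘ Y)) (m : Fin M) :
    ∑ n, (ℙ {ω | f (X ω) = m ∧ g (Y ω) = n}).toReal = (ℙ {ω | f (X ω) = m}).toReal :=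
  sum_toReal_measure_inter_preimage_singleton hg _

lemma sum_toReal_measure_fiber (hg : Measurable (g ∘ Y)) :
    ∑ n, (ℙ {ω | g (Y ω) = n}).toReal = 1 := by
  have := sum_toReal_measure_inter_preimage_singleton hg (μ := ℙ) univ
  simp only [Set.univ_inter, measure_univ, ENNReal.toReal_one] at this
  exact this

end Partition

lemma ofReal_miPartitionSum_le_mutualInformation {Ω 𝒳 𝒴 : Type*} [MeasureSpace Ω]
    [MeasurableSpace 𝒳] [MeasurableSpace 𝒴] {M N : ℕ} (X : Ω → 𝒳) (Y : Ω → 𝒴)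
    {f : 𝒳 → Fin M} {g : 𝒴 → Fin N} (hf : Measurable f) (hg : Measurable g) :
    ENNReal.ofReal (miPartitionSum X Y f g) ≤ mutualInformation X Y :=
  le_iSup_of_le M <| le_iSup_of_le N <| le_iSup_of_le f <| le_iSup_of_le g <|
    le_iSup_of_le hf <| le_iSup_of_le hg le_rfl

lemma mutualInformation_le_log_card {Ω 𝒳 𝒴 : Type*} [MeasureSpace Ω]
    [IsProbabilityMeasure (ℙ : Measure Ω)] [MeasurableSpace 𝒳] [MeasurableSpace 𝒴]
    {X : Ω → 𝒳} {Y : Ω → 𝒴} (hX : Measurable X) (hY : Measurable Y) (T : Finset 𝒴)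
    (hT : ∀ ω, Y ω ∈ T) :
    mutualInformation X Y ≤ ENNReal.ofReal (log #T) := by
  refine iSup_le fun M => iSup_le fun N => iSup_le fun f => iSup_le fun g =>
    iSup_le fun hf => iSup_le fun hg => ENNReal.ofReal_le_ofReal ?_
  have hS : ∀ n ∉ T.image g, (ℙ {ω | g (Y ω) = n}).toReal = 0 := by
    intro n hn
    have : {ω | g (Y ω) = n} = ∅ :=
      Set.eq_empty_of_forall_notMem fun ω hω => hn (mem_image.mpr ⟨Y ω, hT ω, hω⟩)
    simp [this]
  have hne : (T.image g).Nonempty := by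
    obtain ⟨ω⟩ := nonempty_of_isProbabilityMeasure (ℙ : Measure Ω)
    exact ⟨g (Y ω), mem_image_of_mem g (hT ω)⟩
  calc miPartitionSum X Y f g ≤ log #(T.image g) :=
        sum_sum_mul_log_div_le_log_card (fun _ _ => ENNReal.toReal_nonneg)
          (fun _ _ => ENNReal.toReal_mono (measure_ne_top _ _) (measure_mono fun _ h => h.1))
          (sum_toReal_measure_cell_left (hf.comp hX)) (sum_toReal_measure_fiber (hg.comp hY)) hS
    _ ≤ log #T := log_le_log (by exact_mod_cast hne.card_pos) (by exact_mod_cast card_image_le)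

section Quantized

variable {Ω : Type*} [MeasureSpace Ω] {U V : Ω → ℝ} {K : ℕ} [NeZero K]

lemma toReal_measure_quant_eq (hU : Measurable U)
    (hmap : Measure.map U ℙ = volume.restrict (Icc (0 : ℝ) 1)) (m : Fin K) :
    (ℙ {ω | quant K (U ω) = m}).toReal = 1 / K := by
  have hcell : MeasurableSet (quant K ⁻¹' {m}) := measurable_quant (measurableSet_singleton m)
  rw [show {ω | quant K (U ω) = m} = U ⁻¹' (quant K ⁻¹' {m}) from rfl,
    ← Measure.map_apply hU hcell, hmap, Measure.restrict_apply hcell,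
    volume_quant_preimage_inter_Icc, ENNReal.toReal_ofReal (by positivity)]

lemma sum_toReal_measure_quant_far_le [IsProbabilityMeasure (ℙ : Measure Ω)]
    (hU : Measurable U) (hV : Measurable V) (hUr : ∀ ω, U ω ∈ Icc (0 : ℝ) 1)
    (hVr : ∀ ω, V ω ∈ Icc (0 : ℝ) 1) :
    ∑ m : Fin K, ∑ n : Fin K, (if |((m : ℕ) : ℤ) - (n : ℕ)| ≤ 1 then 0
      else (ℙ {ω | quant K (U ω) = m ∧ quant K (V ω) = n}).toReal) ≤
      (ℙ {ω | 1 / K ≤ |U ω - V ω|}).toReal := by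
  set W : Ω → Fin K × Fin K := fun ω => (quant K (U ω), quant K (V ω))
  have hW : Measurable W := (measurable_quant.comp hU).prodMk (measurable_quant.comp hV)
  have hcell : ∀ x, W ⁻¹' {x} = {ω | quant K (U ω) = x.1 ∧ quant K (V ω) = x.2} := fun x => by
    ext ω
    simp [W, Prod.ext_iff]
  set far : Finset (Fin K × Fin K) := {x | ¬|((x.1 : ℕ) : ℤ) - (x.2 : ℕ)| ≤ 1}
  calc ∑ m : Fin K, ∑ n : Fin K, (if |((m : ℕ) : ℤ) - (n : ℕ)| ≤ 1 then 0
        else (ℙ {ω | quant K (U ω) = m ∧ quant K (V ω) = n}).toReal)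
      = ∑ x ∈ far, (ℙ (W ⁻¹' {x})).toReal := by
        rw [sum_filter, ← Fintype.sum_prod_type']
        refine sum_congr rfl fun x _ => ?_
        split_ifs <;> simp [hcell]
    _ = (ℙ (W ⁻¹' far)).toReal :=
        sum_measureReal_preimage_singleton far fun x _ => hW (measurableSet_singleton x)
    _ ≤ (ℙ {ω | 1 / K ≤ |U ω - V ω|}).toReal := by
        refine ENNReal.toReal_mono (measure_ne_top _ _) (measure_mono fun ω hω => ?_)
        simp only [far, coe_filter, Finset.mem_univ, true_and, Set.mem_preimage,
          Set.mem_ofPred_eq, not_le, W] at hω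
        exact inv_le_abs_sub_of_one_lt_abs_quant_sub (hUr ω) (hVr ω) hω

lemma log_sub_le_miPartitionSum_quant [IsProbabilityMeasure (ℙ : Measure Ω)]
    (hU : Measurable U) (hV : Measurable V) (hUr : ∀ ω, U ω ∈ Icc (0 : ℝ) 1)
    (hVr : ∀ ω, V ω ∈ Icc (0 : ℝ) 1) (hmap : Measure.map U ℙ = volume.restrict (Icc (0 : ℝ) 1))
    {e : ℝ} (he : (ℙ {ω | 1 / K ≤ |U ω - V ω|}).toReal ≤ e) :
    log K - log 6 - e * log (2 * K) ≤ miPartitionSum U V (quant K) (quant K) := by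
  have hUq := (measurable_quant (K := K)).comp hU
  have hVq := (measurable_quant (K := K)).comp hV
  have hfano := log_card_sub_le_sum_sum_mul_log_div
    (fun m n : Fin K => |((m : ℕ) : ℤ) - (n : ℕ)| ≤ 1)
    card_filter_abs_sub_le_one_le_three (fun _ _ => ENNReal.toReal_nonneg)
    (sum_toReal_measure_cell_left hUq)
    (by simp only [sum_toReal_measure_cell_right hVq, toReal_measure_quant_eq hU hmap,
      sum_const, card_univ, Fintype.card_fin, nsmul_eq_mul, mul_one_div,
      div_self (NeZero.ne (K : ℝ))])
    ((sum_toReal_measure_quant_far_le hU hV hUr hVr).trans he)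
  rw [Fintype.card_fin, show (2 * ((3 : ℕ) : ℝ)) = 6 by norm_num] at hfano
  simpa only [miPartitionSum, toReal_measure_quant_eq hU hmap] using hfano

end Quantized

lemma rUnif_le_mutualInformation {ε : ℝ} {Ω : Type} [MeasureSpace Ω]
    [IsProbabilityMeasure (ℙ : Measure Ω)] {U V : Ω → ℝ} (hU : Measurable U) (hV : Measurable V)
    (hUr : ∀ ω, U ω ∈ Icc (0 : ℝ) 1) (hVr : ∀ ω, V ω ∈ Icc (0 : ℝ) 1)
    (hmap : Measure.map U ℙ = volume.restrict (Icc (0 : ℝ) 1))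
    (hε : ∫ ω, |U ω - V ω| ∂ℙ ≤ ε) :
    rUnif ε ≤ mutualInformation U V :=
  sInf_le ⟨Ω, _, inferInstance, U, V, hU, hV, hUr, hVr, hmap, hε, rfl⟩

lemma rUnif_le_log (N : ℕ) [NeZero N] {ε : ℝ} (hε : 1 / (2 * N) ≤ ε) :
    rUnif ε ≤ ENNReal.ofReal (log N) := by
  set c : Fin N → ℝ := fun m => ((m : ℕ) + 1 / 2) / N
  set V : unitInterval → ℝ := fun x => c (quant N x)
  have hV : Measurable V :=
    (measurable_from_top (f := c)).comp ((measurable_quant (K := N)).comp measurable_subtype_coe)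
  have hint : ∫ x : unitInterval, |(x : ℝ) - V x| ≤ ε := by
    have := norm_integral_le_of_norm_le_const (μ := (volume : Measure unitInterval))
      (f := fun x => |(x : ℝ) - V x|) (C := 1 / (2 * N))
      (ae_of_all _ fun x => by
        rw [Real.norm_eq_abs, abs_abs]; exact abs_sub_quant_midpoint_le x.2)
    rw [probReal_univ, mul_one, Real.norm_eq_abs] at this
    exact (le_abs_self _).trans (this.trans hε)
  calc rUnif ε ≤ mutualInformation (fun x : unitInterval => (x : ℝ)) V :=
        rUnif_le_mutualInformation measurable_subtype_coe hV (fun x => x.2)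
          (fun x => quant_midpoint_mem_Icc x)
          unitInterval.measurePreserving_coe.map_eq hint
    _ ≤ ENNReal.ofReal (log #(univ.image c)) :=
        mutualInformation_le_log_card measurable_subtype_coe hV _
          fun x => mem_image_of_mem c (mem_univ _)
    _ ≤ ENNReal.ofReal (log N) := by
        refine ENNReal.ofReal_le_ofReal (log_le_log ?_ ?_)
        · exact_mod_cast (Finset.univ_nonempty.image c).card_pos
        · exact_mod_cast card_image_le.trans (card_univ.trans (Fintype.card_fin N)).le

lemma rUnif_le_neg_log {ε : ℝ} (hε : 0 < ε) (hε2 : ε ≤ 1 / 2) :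
    rUnif ε ≤ ENNReal.ofReal (-log ε) := by
  set N := ⌈1 / (2 * ε)⌉₊
  have : NeZero N := ⟨(Nat.ceil_pos.mpr (by positivity)).ne'⟩
  have hN : 1 / (2 * ε) ≤ N := Nat.le_ceil _
  refine (rUnif_le_log N ?_).trans (ENNReal.ofReal_le_ofReal ?_)
  · rw [div_le_iff₀ (by positivity)]
    rw [div_le_iff₀ (by positivity)] at hN
    linarith
  · have hlt : (N : ℝ) < 1 / (2 * ε) + 1 := Nat.ceil_lt_add_one (by positivity)
    have h1 : 1 / (2 * ε) + 1 ≤ 1 / ε := by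
      rw [div_add_one (by positivity), div_le_div_iff₀ (by positivity) hε]
      nlinarith
    rw [← log_inv, ← one_div]
    exact log_le_log (Nat.cast_pos.mpr (NeZero.pos N)) (by linarith)

/-- Markov's inequality bounds the mass off the band `|m - n| ≤ 1` of the `K`-cell partition
by `K ε`. -/
lemma ofReal_log_sub_le_rUnif (K : ℕ) [NeZero K] (ε : ℝ) :
    ENNReal.ofReal (log K - log 6 - K * ε * log (2 * K)) ≤ rUnif ε := by
  refine le_sInf ?_
  rintro _ ⟨Ω, _, _, U, V, hU, hV, hUr, hVr, hmap, hint, rfl⟩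
  have hK : (0 : ℝ) < K := Nat.cast_pos.mpr (NeZero.pos K)
  have hinteg : Integrable (fun ω => |U ω - V ω|) ℙ := by
    refine Integrable.of_bound (hU.sub hV).abs.aestronglyMeasurable 1 (ae_of_all _ fun ω => ?_)
    obtain ⟨⟨hU0, hU1⟩, hV0, hV1⟩ := And.intro (hUr ω) (hVr ω)
    rw [norm_abs_eq_norm, Real.norm_eq_abs, abs_le]
    constructor <;> linarith
  have hmarkov := mul_meas_ge_le_integral_of_nonneg (ae_of_all _ fun ω => abs_nonneg (U ω - V ω))
    hinteg (1 / K)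
  have hfar : (ℙ {ω | 1 / K ≤ |U ω - V ω|}).toReal ≤ K * ε := by
    rw [measureReal_def, one_div_mul_eq_div, div_le_iff₀ hK] at hmarkov
    nlinarith [mul_le_mul_of_nonneg_right hint hK.le]
  exact (ENNReal.ofReal_le_ofReal (log_sub_le_miPartitionSum_quant hU hV hUr hVr hmap hfar)).trans
    (ofReal_miPartitionSum_le_mutualInformation U V measurable_quant measurable_quant)

/-- The lower bound on `r(ε)` obtained from `K = ⌈1/(ε L²)⌉` cells, in terms of
`L = |log ε|` and `ε`. -/
noncomputable def rUnifLowerBound (L ε : ℝ) : ℝ :=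
  L - 2 * log L - log 6 - ((L ^ 2)⁻¹ + ε) * (log 4 + L)

lemma ofReal_rUnifLowerBound_le_rUnif {ε : ℝ} (hε : 0 < ε) (hL : 1 ≤ -log ε) :
    ENNReal.ofReal (rUnifLowerBound (-log ε) ε) ≤ rUnif ε := by
  set L := -log ε
  have hε1 : ε ≤ 1 := by
    by_contra! h
    linarith [log_pos h]
  set K := ⌈1 / (ε * L ^ 2)⌉₊
  have : NeZero K := ⟨(Nat.ceil_pos.mpr (by positivity)).ne'⟩
  have hK : (1 : ℝ) ≤ K := Nat.one_le_cast.mpr (NeZero.pos K)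
  have hKge : 1 / (ε * L ^ 2) ≤ K := Nat.le_ceil _
  have hKlt : (K : ℝ) < 1 / (ε * L ^ 2) + 1 := Nat.ceil_lt_add_one (by positivity)
  have hlogK : L - 2 * log L ≤ log K := by
    calc L - 2 * log L = log (1 / (ε * L ^ 2)) := by
          rw [one_div, log_inv, log_mul hε.ne' (by positivity), log_pow]
          push_cast
          ring
      _ ≤ log K := log_le_log (by positivity) hKge
  have hKε : K * ε ≤ (L ^ 2)⁻¹ + ε := by
    have : (1 / (ε * L ^ 2) + 1) * ε = (L ^ 2)⁻¹ + ε := by field_simp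
    nlinarith
  have hlog2K : log (2 * K) ≤ log 4 + L := by
    have hinv : 1 / (ε * L ^ 2) ≤ 1 / ε :=
      one_div_le_one_div_of_le hε (le_mul_of_one_le_right hε.le (by nlinarith))
    have h1 : 1 ≤ 1 / ε := by rw [le_div_iff₀ hε]; linarith
    rw [show log 4 + L = log (4 * (1 / ε)) by
      rw [log_mul (by norm_num) (by positivity), one_div, log_inv]]
    exact log_le_log (by positivity) (by linarith)
  have hlog2K0 : 0 ≤ log (2 * K) := log_nonneg (by linarith)
  refine le_trans (ENNReal.ofReal_le_ofReal ?_) (ofReal_log_sub_le_rUnif K ε)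
  have := mul_le_mul hKε hlog2K hlog2K0 (by positivity)
  unfold rUnifLowerBound
  linarith

lemma tendsto_rUnifLowerBound_div :
    Tendsto (fun ε => rUnifLowerBound (-log ε) ε / -log ε) (𝓝[>] 0) (𝓝 1) := by
  have hL : Tendsto (fun ε => -log ε) (𝓝[>] 0) atTop :=
    tendsto_neg_atBot_atTop.comp tendsto_log_nhdsGT_zero
  have hlogL : Tendsto (fun ε => log (-log ε) / -log ε) (𝓝[>] 0) (𝓝 0) :=
    isLittleO_log_id_atTop.tendsto_div_nhds_zero.comp hL
  have hinvL : Tendsto (fun ε => ((-log ε) ^ 2)⁻¹) (𝓝[>] 0) (𝓝 0) :=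
    tendsto_inv_atTop_zero.comp ((tendsto_pow_atTop two_ne_zero).comp hL)
  have hε : Tendsto (fun ε : ℝ => ε) (𝓝[>] 0) (𝓝 0) := tendsto_nhdsWithin_of_tendsto_nhds tendsto_id
  have hlim : Tendsto (fun ε => 1 - 2 * (log (-log ε) / -log ε) - log 6 / -log ε -
      (((-log ε) ^ 2)⁻¹ + ε) * (log 4 / -log ε + 1)) (𝓝[>] 0) (𝓝 1) := by
    simpa using ((tendsto_const_nhds (x := (1 : ℝ))).sub (hlogL.const_mul 2)).sub
      ((tendsto_const_nhds (x := log 6)).div_atTop hL) |>.sub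
      ((hinvL.add hε).mul (((tendsto_const_nhds (x := log 4)).div_atTop hL).add
        (tendsto_const_nhds (x := (1 : ℝ)))))
  refine hlim.congr' ?_
  filter_upwards [hL.eventually_gt_atTop 0] with ε hpos
  have hne : log ε ≠ 0 := by linarith
  simp only [rUnifLowerBound]
  field_simp
  ring

/-- `r(ε) ~ |log ε|` as `ε → 0`: `lim_{ε→0} r(ε)/|log ε| = 1`. -/
theorem rUnif_asymptotic :
    Tendsto (fun ε : ℝ => (rUnif ε).toReal / |Real.log ε|) (𝓝[>] (0 : ℝ)) (𝓝 1) := by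
  have hbounds : ∀ᶠ ε in 𝓝[>] (0 : ℝ),
      rUnifLowerBound (-log ε) ε / -log ε ≤ (rUnif ε).toReal / |log ε| ∧
        (rUnif ε).toReal / |log ε| ≤ 1 := by
    filter_upwards [Ioo_mem_nhdsGT (show (0 : ℝ) < 1 / 2 by norm_num),
      tendsto_log_nhdsGT_zero.eventually_le_atBot (-1)]
      with ε ⟨hε, hε2⟩ hL
    have hup := rUnif_le_neg_log hε hε2.le
    have hfin : rUnif ε ≠ ⊤ := ne_top_of_le_ne_top ENNReal.ofReal_ne_top hup
    rw [abs_of_nonpos (by linarith), div_le_one (by linarith)]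
    exact ⟨div_le_div_of_nonneg_right ((ENNReal.ofReal_le_iff_le_toReal hfin).mp
        (ofReal_rUnifLowerBound_le_rUnif hε (by linarith))) (by linarith),
      ENNReal.toReal_le_of_le_ofReal (by linarith) hup⟩
  exact tendsto_of_tendsto_of_tendsto_of_le_of_le' tendsto_rUnifLowerBound_div tendsto_const_nhds
    (hbounds.mono fun _ h => h.1) (hbounds.mono fun _ h => h.2)
end
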